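/- Let b > 1, m > 0, n > 0 be real, q ≥ 0 an integer, z_k := exp(−n(b−1)/(m·b^k)), t := b^{−q}/(b−1), and let p̃(w, β_1,…,β_q) := z_w^{1/(b−1)}·(1−z_w)·∏_{j=1}^q z_{w−j}^{1−β_j}·(1−z_{w−j})^{β_j}. Define for each state F₁(w,β) := ln z_w/(b−1) − z_w·ln z_w/(1−z_w) + ∑_{j=1}^q [ (1−β_j)·ln z_{w−j} − β_j·z_{w−j}·ln z_{w−j}/(1−z_{w−j}) ] and F₂(w,β) := z_w·(ln z_w)²/(1−z_w)² + ∑_{j=1}^q β_j·z_{w−j}·(ln z_{w−j})²/(1−z_{w−j})². Then (assuming all series converge absolutely) ∑_{w∈ℤ} ∑_{β_1,…,β_q∈{0,1}} p̃(w,β)·F₁(w,β)·F₂(w,β) = −∑_{w∈ℤ} z_w^{1+t}·(ln z_w)³/(1−z_w)² · ( z_w·(1+t) − t ). -/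

import Mathlib

open Real Finset

/-- z_k = exp(−n(b−1)/(m·b^k)). -/
noncomputable def zf (b m n : ℝ) (k : ℤ) : ℝ :=
  Real.exp (-(n * (b - 1)) / (m * b ^ k))

/-- The simplified register probability mass. -/
noncomputable def ptilde (b m n : ℝ) (q : ℕ) (w : ℤ) (β : Fin q → Fin 2) : ℝ :=
  zf b m n w ^ (1 / (b - 1)) * (1 - zf b m n w) *
    ∏ j : Fin q,
      zf b m n (w - ((j : ℕ) : ℤ) - 1) ^ (1 - (β j : ℕ)) *
        (1 - zf b m n (w - ((j : ℕ) : ℤ) - 1)) ^ ((β j : ℕ))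

/-- F₁(w,β) = ln z_w/(b−1) − z_w·ln z_w/(1−z_w)
+ ∑_{j=1}^q [(1−β_j)·ln z_{w−j} − β_j·z_{w−j}·ln z_{w−j}/(1−z_{w−j})], i.e. n·∂/∂n ln p̃. -/
noncomputable def F1 (b m n : ℝ) (q : ℕ) (w : ℤ) (β : Fin q → Fin 2) : ℝ :=
  Real.log (zf b m n w) / (b - 1) -
    zf b m n w * Real.log (zf b m n w) / (1 - zf b m n w) +
    ∑ j : Fin q,
      ((1 - ((β j : ℕ) : ℝ)) * Real.log (zf b m n (w - ((j : ℕ) : ℤ) - 1)) -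
        ((β j : ℕ) : ℝ) * (zf b m n (w - ((j : ℕ) : ℤ) - 1) *
          Real.log (zf b m n (w - ((j : ℕ) : ℤ) - 1)) /
            (1 - zf b m n (w - ((j : ℕ) : ℤ) - 1))))

/-- F₂(w,β) = z_w·(ln z_w)²/(1−z_w)² + ∑_{j=1}^q β_j·z_{w−j}·(ln z_{w−j})²/(1−z_{w−j})²,
i.e. −n²·∂²/∂n² ln p̃. -/
noncomputable def F2 (b m n : ℝ) (q : ℕ) (w : ℤ) (β : Fin q → Fin 2) : ℝ :=
  zf b m n w * Real.log (zf b m n w) ^ 2 / (1 - zf b m n w) ^ 2 +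
    ∑ j : Fin q, ((β j : ℕ) : ℝ) *
      (zf b m n (w - ((j : ℕ) : ℤ) - 1) *
        Real.log (zf b m n (w - ((j : ℕ) : ℤ) - 1)) ^ 2 /
          (1 - zf b m n (w - ((j : ℕ) : ℤ) - 1)) ^ 2)

/-! ### Auxiliary definitions -/

noncomputable def CC (b m n : ℝ) (w : ℤ) : ℝ :=
  zf b m n w ^ (1/(b-1)) * (1 - zf b m n w)
noncomputable def AA (b m n : ℝ) (w : ℤ) : ℝ :=
  Real.log (zf b m n w)/(b-1) - zf b m n w * Real.log (zf b m n w)/(1 - zf b m n w)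
noncomputable def GG (b m n : ℝ) (k : ℤ) : ℝ :=
  zf b m n k * Real.log (zf b m n k)^2/(1 - zf b m n k)
noncomputable def HH (b m n : ℝ) (k : ℤ) : ℝ :=
  -(zf b m n k^2 * Real.log (zf b m n k)^3/(1 - zf b m n k)^2)
noncomputable def BB (b m n : ℝ) (w : ℤ) : ℝ :=
  zf b m n w * Real.log (zf b m n w)^2/(1 - zf b m n w)^2
noncomputable def PP (b m n : ℝ) (w : ℤ) : ℝ := CC b m n w * AA b m n w * BB b m n w
noncomputable def QQ (b m n : ℝ) (j : ℕ) (w : ℤ) : ℝ :=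
  CC b m n w * (AA b m n w * GG b m n (w - j) + HH b m n (w - j))
noncomputable def WW (b m n : ℝ) (q : ℕ) (w : ℤ) : ℝ :=
  Real.log (zf b m n w)^3 * zf b m n w ^ (b^(-(q:ℤ))/(b-1)) *
    (b^(-(q:ℤ))/(b-1) * zf b m n w / (1 - zf b m n w)
      - zf b m n w^2/(1 - zf b m n w)^2)

/-! ### Basic facts about zf -/

lemma zf_pos (b m n : ℝ) (k : ℤ) : 0 < zf b m n k := Real.exp_pos _

lemma zf_lt_one {b m n : ℝ} (hb : 1 < b) (hm : 0 < m) (hn : 0 < n) (k : ℤ) :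
    zf b m n k < 1 := by
  rw [zf, Real.exp_lt_one_iff]
  have hbk : (0:ℝ) < b ^ k := zpow_pos (by linarith) k
  have : 0 < n * (b - 1) := by nlinarith
  have : 0 < m * b ^ k := by positivity
  rw [div_neg_iff]
  right
  constructor <;> linarith

lemma one_sub_exp_pos {x : ℝ} (hx : 0 < x) : 0 < 1 - Real.exp (-x) := by
  have : Real.exp (-x) < 1 := Real.exp_lt_one_iff.mpr (by linarith)
  linarith

lemma one_sub_exp_le {x : ℝ} : 1 - Real.exp (-x) ≤ x := by
  have := Real.add_one_le_exp (-x)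
  linarith

lemma exp_mul_le {x : ℝ} : Real.exp (-x) * x ≤ 1 - Real.exp (-x) := by
  have h1 := Real.add_one_le_exp x
  have h2 : Real.exp (-x) * Real.exp x = 1 := by
    rw [← Real.exp_add]; simp
  nlinarith [Real.exp_pos (-x)]

lemma zf_eq_exp {b m n : ℝ} (hb : 1 < b) (hm : 0 < m) (w : ℤ) :
    zf b m n w = Real.exp (-(n*(b-1)/m * b^(-w))) := by
  have hbne : b ≠ 0 := by linarith
  have hbw : (b:ℝ)^w ≠ 0 := zpow_ne_zero w hbne
  rw [zf]
  congr 1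
  rw [zpow_neg]
  field_simp

lemma zf_shift_eq_exp {b m n : ℝ} (hb : 1 < b) (hm : 0 < m) (w : ℤ) (j : ℕ) :
    zf b m n (w - j) = Real.exp (-(n*(b-1)/m * b^(-w) * b^j)) := by
  have hbne : b ≠ 0 := by linarith
  have hbw : (b:ℝ)^w ≠ 0 := zpow_ne_zero w hbne
  have hbj : (b:ℝ)^(j:ℕ) ≠ 0 := pow_ne_zero _ hbne
  rw [zf]
  congr 1
  rw [zpow_sub₀ hbne, zpow_neg, zpow_natCast]
  field_simp
  try ring

lemma zf_rpow_eq_exp {b m n : ℝ} (hb : 1 < b) (hm : 0 < m) (w : ℤ) :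
    zf b m n w ^ (1/(b-1) : ℝ) = Real.exp (-(1/(b-1) * (n*(b-1)/m * b^(-w)))) := by
  rw [zf_eq_exp hb hm, Real.rpow_def_of_pos (Real.exp_pos _), Real.log_exp]
  congr 1
  ring

lemma log_zf_shift {b : ℝ} (m n : ℝ) (hb : 1 < b) (hm : 0 < m) (w : ℤ) (k : ℤ) :
    Real.log (zf b m n (w + k)) = b^(-k) * Real.log (zf b m n w) := by
  have hbne : b ≠ 0 := by linarith
  have hbw : (b:ℝ)^w ≠ 0 := zpow_ne_zero w hbne
  have hbk : (b:ℝ)^k ≠ 0 := zpow_ne_zero k hbne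
  simp only [zf, Real.log_exp, zpow_add₀ hbne, zpow_neg]
  field_simp
  try tauto

/-! ### Pointwise bounds -/

lemma aa_aux (c x : ℝ) (hc : 0 < c) (hx : 0 < x) :
    |(-x)/c - Real.exp (-x) * (-x)/(1 - Real.exp (-x))| ≤ x/c + 1 := by
  set A := Real.exp (-x) with hA
  have hA0 : 0 < A := Real.exp_pos _
  have h1A : 0 < 1 - A := one_sub_exp_pos hx
  have h3 : A * x ≤ 1 - A := exp_mul_le
  have hdiv0 : 0 ≤ A * x / (1 - A) := by positivity
  have hdiv1 : A * x / (1 - A) ≤ 1 := by rw [div_le_one h1A]; exact h3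
  have heq : (-x)/c - A * (-x)/(1-A) = -(x/c) + A*x/(1-A) := by ring
  rw [heq, abs_le]
  have hxc : 0 < x/c := by positivity
  constructor <;> linarith

lemma pp_aux (c x M : ℝ) (hc : 0 < c) (hx : 0 < x) (hM : |M| ≤ x/c + 1) :
    |Real.exp (-(1/c*x)) * (1 - Real.exp (-x)) * M *
       (Real.exp (-x) * (-x)^2 / (1 - Real.exp (-x))^2)|
      ≤ Real.exp (-(1/c*x)) * (x^2/c + x) := by
  set A := Real.exp (-x) with hA
  set E := Real.exp (-(1/c*x)) with hE
  have hA0 : 0 < A := Real.exp_pos _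
  have hE0 : 0 < E := Real.exp_pos _
  have h1A : 0 < 1 - A := one_sub_exp_pos hx
  have h3 : A * x ≤ 1 - A := exp_mul_le
  have hBB0 : 0 ≤ A * (-x)^2/(1-A)^2 := by positivity
  have hCC0 : 0 ≤ E * (1 - A) := by positivity
  calc |E * (1 - A) * M * (A * (-x)^2/(1-A)^2)|
      = (E * (1 - A) * (A * (-x)^2/(1-A)^2)) * |M| := by
        rw [abs_mul, abs_mul, abs_of_nonneg hCC0, abs_of_nonneg hBB0]
        ring
    _ ≤ (E * (1 - A) * (A * (-x)^2/(1-A)^2)) * (x/c + 1) := by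
        apply mul_le_mul_of_nonneg_left hM (by positivity)
    _ = (E * (A * x^2 / (1-A))) * (x/c + 1) := by
        rw [neg_sq]
        field_simp
    _ ≤ (E * x) * (x/c + 1) := by
        apply mul_le_mul_of_nonneg_right _ (by positivity)
        apply mul_le_mul_of_nonneg_left _ (le_of_lt hE0)
        rw [div_le_iff₀ h1A]
        calc A * x^2 = (A*x)*x := by ring
          _ ≤ (1-A)*x := mul_le_mul_of_nonneg_right h3 (le_of_lt hx)
          _ = x * (1-A) := by ring
    _ = E * (x^2/c + x) := by ring

lemma qq_aux (c x u M : ℝ) (hc : 0 < c) (hx : 0 < x) (hu : 0 < u) (hM : |M| ≤ x/c + 1) :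
    |Real.exp (-(1/c*x)) * (1 - Real.exp (-x)) *
      (M * (Real.exp (-u) * Real.log (Real.exp (-u))^2 / (1 - Real.exp (-u))) +
        -(Real.exp (-u)^2 * Real.log (Real.exp (-u))^3 / (1 - Real.exp (-u))^2))|
      ≤ Real.exp (-(1/c*x)) * x * ((x/c + 2) * u) := by
  rw [Real.log_exp]
  set A := Real.exp (-x) with hA
  set E := Real.exp (-(1/c*x)) with hE
  set Y := Real.exp (-u) with hY
  have hA0 : 0 < A := Real.exp_pos _
  have hE0 : 0 < E := Real.exp_pos _
  have hY0 : 0 < Y := Real.exp_pos _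
  have h1A : 0 < 1 - A := one_sub_exp_pos hx
  have h1Y : 0 < 1 - Y := one_sub_exp_pos hu
  have h2A : 1 - A ≤ x := one_sub_exp_le
  have h3Y : Y * u ≤ 1 - Y := exp_mul_le
  have hGv : Y * (-u)^2 / (1-Y) = Y * u^2/(1-Y) := by ring_nf
  have hHv : -(Y^2 * (-u)^3 / (1-Y)^2) = Y^2 * u^3/(1-Y)^2 := by ring_nf
  rw [hGv, hHv]
  have hG0 : 0 ≤ Y * u^2/(1-Y) := by positivity
  have hGle : Y * u^2/(1-Y) ≤ u := by
    rw [div_le_iff₀ h1Y]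
    calc Y * u^2 = (Y*u)*u := by ring
      _ ≤ (1-Y)*u := mul_le_mul_of_nonneg_right h3Y (le_of_lt hu)
      _ = u * (1-Y) := by ring
  have hH0 : 0 ≤ Y^2 * u^3/(1-Y)^2 := by positivity
  have hHle : Y^2 * u^3/(1-Y)^2 ≤ u := by
    rw [div_le_iff₀ (by positivity)]
    calc Y^2 * u^3 = (Y*u)^2*u := by ring
      _ ≤ (1-Y)^2*u := by
          apply mul_le_mul_of_nonneg_right _ (le_of_lt hu)
          apply pow_le_pow_left₀ (by positivity) h3Y
      _ = u * (1-Y)^2 := by ring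
  have hmid : |M * (Y * u^2/(1-Y)) + Y^2 * u^3/(1-Y)^2| ≤ (x/c + 2) * u := by
    calc |M * (Y * u^2/(1-Y)) + Y^2 * u^3/(1-Y)^2|
        ≤ |M * (Y * u^2/(1-Y))| + |Y^2 * u^3/(1-Y)^2| := abs_add_le _ _
      _ = |M| * (Y * u^2/(1-Y)) + Y^2 * u^3/(1-Y)^2 := by
          rw [abs_mul, abs_of_nonneg hG0, abs_of_nonneg hH0]
      _ ≤ (x/c + 1) * u + u := by
          apply add_le_add _ hHle
          calc |M| * (Y * u^2/(1-Y)) ≤ (x/c+1) * (Y * u^2/(1-Y)) :=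
                mul_le_mul_of_nonneg_right hM hG0
            _ ≤ (x/c+1) * u := mul_le_mul_of_nonneg_left hGle (by positivity)
      _ = (x/c + 2) * u := by ring
  calc |E * (1 - A) * (M * (Y * u^2/(1-Y)) + Y^2 * u^3/(1-Y)^2)|
      = (E * (1 - A)) * |M * (Y * u^2/(1-Y)) + Y^2 * u^3/(1-Y)^2| := by
        rw [abs_mul, abs_of_nonneg (by positivity : (0:ℝ) ≤ E * (1 - A))]
    _ ≤ (E * x) * ((x/c + 2) * u) := by
        apply mul_le_mul _ hmid (abs_nonneg _) (by positivity)
        exact mul_le_mul_of_nonneg_left h2A (le_of_lt hE0)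
    _ = E * x * ((x/c + 2) * u) := by ring

lemma AA_abs_le {b m n : ℝ} (hb : 1 < b) (hm : 0 < m) (hn : 0 < n) (w : ℤ) :
    |AA b m n w| ≤ (n*(b-1)/m * b^(-w))/(b-1) + 1 := by
  have hx : 0 < n*(b-1)/m * b^(-w) :=
    mul_pos (div_pos (by nlinarith) hm) (zpow_pos (by linarith) _)
  rw [AA, zf_eq_exp hb hm, Real.log_exp]
  exact aa_aux (b-1) _ (by linarith) hx

lemma PP_bound {b m n : ℝ} (hb : 1 < b) (hm : 0 < m) (hn : 0 < n) (w : ℤ) :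
    |PP b m n w| ≤ Real.exp (-(1/(b-1) * (n*(b-1)/m * b^(-w)))) *
      ((n*(b-1)/m * b^(-w))^2/(b-1) + n*(b-1)/m * b^(-w)) := by
  have hx : 0 < n*(b-1)/m * b^(-w) :=
    mul_pos (div_pos (by nlinarith) hm) (zpow_pos (by linarith) _)
  have hAA := AA_abs_le hb hm hn w
  rw [PP, CC, BB, zf_rpow_eq_exp hb hm, zf_eq_exp hb hm, Real.log_exp]
  exact pp_aux (b-1) _ _ (by linarith) hx hAA

lemma QQ_bound {b m n : ℝ} (hb : 1 < b) (hm : 0 < m) (hn : 0 < n) (j : ℕ) (w : ℤ) :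
    |QQ b m n j w| ≤ b^j * (Real.exp (-(1/(b-1) * (n*(b-1)/m * b^(-w)))) *
      ((n*(b-1)/m * b^(-w))^3/(b-1) + 2*(n*(b-1)/m * b^(-w))^2)) := by
  have hb0 : (0:ℝ) < b := by linarith
  have hx : 0 < n*(b-1)/m * b^(-w) :=
    mul_pos (div_pos (by nlinarith) hm) (zpow_pos (by linarith) _)
  have hu : 0 < n*(b-1)/m * b^(-w) * b^j := by positivity
  have hAA := AA_abs_le hb hm hn w
  have h := qq_aux (b-1) (n*(b-1)/m * b^(-w)) (n*(b-1)/m * b^(-w) * b^j)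
    (AA b m n w) (by linarith) hx hu hAA
  calc |QQ b m n j w|
      ≤ Real.exp (-(1/(b-1) * (n*(b-1)/m * b^(-w)))) * (n*(b-1)/m * b^(-w)) *
          (((n*(b-1)/m * b^(-w))/(b-1) + 2) * (n*(b-1)/m * b^(-w) * b^j)) := by
        rw [QQ, CC, GG, HH, zf_rpow_eq_exp hb hm, zf_eq_exp hb hm,
          zf_shift_eq_exp hb hm w j]
        exact h
    _ = b^j * (Real.exp (-(1/(b-1) * (n*(b-1)/m * b^(-w)))) *
          ((n*(b-1)/m * b^(-w))^3/(b-1) + 2*(n*(b-1)/m * b^(-w))^2)) := by ring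

/-! ### Summability -/

lemma exp_poly_bound (α x : ℝ) (hα : 0 < α) (hx : 0 < x) (p : ℕ) :
    Real.exp (-(α*x)) * x^p ≤ ((p+1:ℝ)/α)^(p+1) / x := by
  have hp1 : (0:ℝ) < (p:ℝ)+1 := by positivity
  have key : (α*x/((p:ℝ)+1))^(p+1) ≤ Real.exp (α*x) := by
    have h1 : α*x/((p:ℝ)+1) ≤ Real.exp (α*x/((p:ℝ)+1)) := by
      have := Real.add_one_le_exp (α*x/((p:ℝ)+1))
      linarith
    calc (α*x/((p:ℝ)+1))^(p+1) ≤ (Real.exp (α*x/((p:ℝ)+1)))^(p+1) :=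
          pow_le_pow_left₀ (by positivity) h1 _
      _ = Real.exp (α*x) := by
          rw [← Real.exp_nat_mul]
          congr 1
          field_simp
          norm_num
  rw [Real.exp_neg, inv_mul_le_iff₀ (Real.exp_pos _), ← mul_div_assoc, le_div_iff₀ hx]
  calc x^p * x = (α*x/((p:ℝ)+1))^(p+1) * (((p:ℝ)+1)/α)^(p+1) := by
        rw [← mul_pow]
        have : α*x/((p:ℝ)+1) * (((p:ℝ)+1)/α) = x := by field_simp
        rw [this, pow_succ]
    _ ≤ Real.exp (α*x) * (((p:ℝ)+1)/α)^(p+1) := by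
        apply mul_le_mul_of_nonneg_right key (by positivity)

lemma master {b c α : ℝ} (hb : 1 < b) (hc : 0 < c) (hα : 0 < α) (p : ℕ) (hp : 1 ≤ p) :
    Summable (fun w : ℤ => Real.exp (-(α * (c * b ^ (-w)))) * (c * b ^ (-w)) ^ p) := by
  have hb0 : (0:ℝ) < b := by linarith
  have hbi0 : (0:ℝ) ≤ b⁻¹ := by positivity
  have hbi1 : b⁻¹ < 1 := by
    rw [inv_lt_one_iff₀]; right; exact hb
  rw [summable_int_iff_summable_nat_and_neg]
  constructor
  · apply Summable.of_nonneg_of_le (g := fun k : ℕ =>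
      Real.exp (-(α * (c * b ^ (-(k:ℤ)))) ) * (c * b ^ (-(k:ℤ))) ^ p)
      (fun k => by positivity)
      (f := fun k : ℕ => c^p * (b⁻¹)^k)
    · intro k
      have hbk : (b:ℝ) ^ (-(k:ℤ)) = (b⁻¹)^k := by
        rw [zpow_neg, zpow_natCast, inv_pow]
      rw [hbk]
      have h1 : Real.exp (-(α * (c * (b⁻¹)^k))) ≤ 1 := by
        rw [Real.exp_le_one_iff]
        have h0 : (0:ℝ) < (b⁻¹)^k := by positivity
        have := mul_pos hα (mul_pos hc h0)
        linarith
      have h2 : (c * (b⁻¹)^k) ^ p ≤ c^p * (b⁻¹)^k := by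
        rw [mul_pow, ← pow_mul]
        apply mul_le_mul_of_nonneg_left _ (by positivity)
        apply pow_le_pow_of_le_one hbi0 (le_of_lt hbi1)
        calc k = k * 1 := (mul_one k).symm
          _ ≤ k * p := Nat.mul_le_mul_left k hp
      calc Real.exp (-(α * (c * (b⁻¹)^k))) * (c * (b⁻¹)^k) ^ p
          ≤ 1 * (c^p * (b⁻¹)^k) := by
            apply mul_le_mul h1 h2 (by positivity) (by norm_num)
        _ = c^p * (b⁻¹)^k := by ring
    · exact (summable_geometric_of_lt_one hbi0 hbi1).mul_left _
  · apply Summable.of_nonneg_of_le (g := fun k : ℕ =>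
      Real.exp (-(α * (c * b ^ (-(-(k:ℤ))))) ) * (c * b ^ (-(-(k:ℤ)))) ^ p)
      (fun k => by positivity)
      (f := fun k : ℕ => (((p:ℝ)+1)/α)^(p+1)/c * (b⁻¹)^k)
    · intro k
      have hbk : (b:ℝ) ^ (-(-(k:ℤ))) = b^k := by
        rw [neg_neg, zpow_natCast]
      rw [hbk]
      have hx : 0 < c * b^k := by positivity
      calc Real.exp (-(α * (c * b^k))) * (c * b^k) ^ p
          ≤ (((p:ℝ)+1)/α)^(p+1) / (c * b^k) := exp_poly_bound α _ hα hx p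
        _ = (((p:ℝ)+1)/α)^(p+1)/c * (b⁻¹)^k := by
            rw [inv_pow, ← div_div, div_eq_mul_inv]
    · exact (summable_geometric_of_lt_one hbi0 hbi1).mul_left _

lemma PP_summable {b m n : ℝ} (hb : 1 < b) (hm : 0 < m) (hn : 0 < n) :
    Summable (PP b m n) := by
  have hc : 0 < n*(b-1)/m := div_pos (by nlinarith) hm
  have hα : 0 < 1/(b-1) := by
    have : (0:ℝ) < b - 1 := by linarith
    positivity
  have hD : Summable (fun w : ℤ => Real.exp (-(1/(b-1) * (n*(b-1)/m * b^(-w)))) *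
      ((n*(b-1)/m * b^(-w))^2/(b-1) + n*(b-1)/m * b^(-w))) := by
    apply Summable.congr (((master hb hc hα 2 (by norm_num)).div_const (b-1)).add
      (master hb hc hα 1 (by norm_num)))
    intro w
    ring
  have habs : Summable (fun w : ℤ => |PP b m n w|) :=
    Summable.of_nonneg_of_le (fun w => abs_nonneg _) (fun w => PP_bound hb hm hn w) hD
  exact summable_abs_iff.mp habs

lemma QQ_summable {b m n : ℝ} (hb : 1 < b) (hm : 0 < m) (hn : 0 < n) (j : ℕ) :
    Summable (fun w : ℤ => QQ b m n j w) := by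
  have hc : 0 < n*(b-1)/m := div_pos (by nlinarith) hm
  have hα : 0 < 1/(b-1) := by
    have : (0:ℝ) < b - 1 := by linarith
    positivity
  have hD : Summable (fun w : ℤ => b^j * (Real.exp (-(1/(b-1) * (n*(b-1)/m * b^(-w)))) *
      ((n*(b-1)/m * b^(-w))^3/(b-1) + 2*(n*(b-1)/m * b^(-w))^2))) := by
    apply Summable.mul_left
    apply Summable.congr (((master hb hc hα 3 (by norm_num)).div_const (b-1)).add
      ((master hb hc hα 2 (by norm_num)).mul_left 2))
    intro w
    ring
  have habs : Summable (fun w : ℤ => |QQ b m n j w|) :=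
    Summable.of_nonneg_of_le (fun w => abs_nonneg _) (fun w => QQ_bound hb hm hn j w) hD
  exact summable_abs_iff.mp habs

/-! ### The expectation lemma over bit vectors -/

lemma exp_lemma : ∀ (q : ℕ) (W f g : Fin q → Fin 2 → ℝ),
    (∀ i, W i 0 + W i 1 = 1) → (∀ i, W i 0 * f i 0 + W i 1 * f i 1 = 0) → ∀ (A B : ℝ),
    ∑ β : Fin q → Fin 2, ((∏ i, W i (β i)) *
      ((A + ∑ i, f i (β i)) * (B + ∑ i, g i (β i))))
    = A * B + A * (∑ i, (W i 0 * g i 0 + W i 1 * g i 1))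
      + ∑ i, (W i 0 * f i 0 * g i 0 + W i 1 * f i 1 * g i 1) := by
  intro q
  induction q with
  | zero =>
    intro W f g hW hf A B
    simp
  | succ p ih =>
    intro W f g hW hf A B
    rw [← (Fin.consEquiv (fun _ : Fin (p+1) => Fin 2)).sum_comp]
    rw [Fintype.sum_prod_type]
    simp only [Fin.consEquiv_apply, Fin.prod_univ_succ, Fin.sum_univ_succ,
      Fin.cons_zero, Fin.cons_succ]
    have inner : ∀ c : Fin 2,
        (∑ β : Fin p → Fin 2, (W 0 c * ∏ i : Fin p, W i.succ (β i)) *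
          ((A + (f 0 c + ∑ i : Fin p, f i.succ (β i))) *
           (B + (g 0 c + ∑ i : Fin p, g i.succ (β i)))))
        = W 0 c * ((A + f 0 c) * (B + g 0 c)
          + (A + f 0 c) * (∑ i : Fin p, (W i.succ 0 * g i.succ 0 + W i.succ 1 * g i.succ 1))
          + ∑ i : Fin p, (W i.succ 0 * f i.succ 0 * g i.succ 0
              + W i.succ 1 * f i.succ 1 * g i.succ 1)) := by
      intro c
      rw [← ih (fun i => W i.succ) (fun i => f i.succ) (fun i => g i.succ)
        (fun i => hW i.succ) (fun i => hf i.succ) (A + f 0 c) (B + g 0 c), Finset.mul_sum]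
      apply Finset.sum_congr rfl
      intro β _
      ring
    simp only [Fin.sum_univ_zero, add_zero, Fin.succ_zero_eq_one]
    rw [inner 0, inner 1]
    have h1 := hW 0
    have h2 := hf 0
    set Sg := ∑ i : Fin p, (W i.succ 0 * g i.succ 0 + W i.succ 1 * g i.succ 1)
    set Sfg := ∑ i : Fin p, (W i.succ 0 * f i.succ 0 * g i.succ 0
        + W i.succ 1 * f i.succ 1 * g i.succ 1)
    linear_combination (A * B + A * Sg + Sfg) * h1 + (B + Sg) * h2

/-! ### The per-w identity -/

lemma pointwise (b m n : ℝ) (hb : 1 < b) (hm : 0 < m) (hn : 0 < n) (q : ℕ) (w : ℤ) :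
    ∑ β : Fin q → Fin 2, ptilde b m n q w β * F1 b m n q w β * F2 b m n q w β
    = PP b m n w + ∑ i ∈ Finset.range q, QQ b m n (i+1) w := by
  have hlt : ∀ k : ℤ, zf b m n k < 1 := zf_lt_one hb hm hn
  set W : Fin q → Fin 2 → ℝ := fun j c =>
    zf b m n (w - ((j:ℕ):ℤ) - 1) ^ (1 - (c:ℕ)) *
      (1 - zf b m n (w - ((j:ℕ):ℤ) - 1)) ^ (c:ℕ) with hWdef
  set f : Fin q → Fin 2 → ℝ := fun j c =>
    (1 - ((c:ℕ):ℝ)) * Real.log (zf b m n (w - ((j:ℕ):ℤ) - 1)) -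
      ((c:ℕ):ℝ) * (zf b m n (w - ((j:ℕ):ℤ) - 1) *
        Real.log (zf b m n (w - ((j:ℕ):ℤ) - 1)) /
          (1 - zf b m n (w - ((j:ℕ):ℤ) - 1))) with hfdef
  set g : Fin q → Fin 2 → ℝ := fun j c =>
    ((c:ℕ):ℝ) * (zf b m n (w - ((j:ℕ):ℤ) - 1) *
      Real.log (zf b m n (w - ((j:ℕ):ℤ) - 1)) ^ 2 /
        (1 - zf b m n (w - ((j:ℕ):ℤ) - 1)) ^ 2) with hgdef
  have hstep : ∀ β : Fin q → Fin 2,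
      ptilde b m n q w β * F1 b m n q w β * F2 b m n q w β
      = CC b m n w * ((∏ j, W j (β j)) *
          ((AA b m n w + ∑ j, f j (β j)) * (BB b m n w + ∑ j, g j (β j)))) := by
    intro β
    simp only [ptilde, F1, F2, CC, AA, BB, hWdef, hfdef, hgdef]
    ring
  rw [Finset.sum_congr rfl (fun β _ => hstep β), ← Finset.mul_sum]
  have hW : ∀ i, W i 0 + W i 1 = 1 := by
    intro i
    simp only [hWdef]
    norm_num
  have hf : ∀ i, W i 0 * f i 0 + W i 1 * f i 1 = 0 := by
    intro i
    have h1 := hlt (w - ((i:ℕ):ℤ) - 1)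
    have h2 : (1:ℝ) - zf b m n (w - ((i:ℕ):ℤ) - 1) ≠ 0 := by linarith
    simp only [hWdef, hfdef]
    norm_num
    field_simp
    ring
  rw [exp_lemma q W f g hW hf (AA b m n w) (BB b m n w)]
  have hEg : ∀ j : Fin q, W j 0 * g j 0 + W j 1 * g j 1 = GG b m n (w - ((j:ℕ):ℤ) - 1) := by
    intro j
    have h1 := hlt (w - ((j:ℕ):ℤ) - 1)
    have h2 : (1:ℝ) - zf b m n (w - ((j:ℕ):ℤ) - 1) ≠ 0 := by linarith
    simp only [hWdef, hgdef, GG]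
    norm_num
    field_simp
  have hEfg : ∀ j : Fin q, W j 0 * f j 0 * g j 0 + W j 1 * f j 1 * g j 1
      = HH b m n (w - ((j:ℕ):ℤ) - 1) := by
    intro j
    have h1 := hlt (w - ((j:ℕ):ℤ) - 1)
    have h2 : (1:ℝ) - zf b m n (w - ((j:ℕ):ℤ) - 1) ≠ 0 := by linarith
    simp only [hWdef, hfdef, hgdef, HH]
    norm_num
    field_simp
  rw [Finset.sum_congr rfl (fun j _ => hEg j), Finset.sum_congr rfl (fun j _ => hEfg j)]
  have hQQ : ∀ j : Fin q, CC b m n w * (AA b m n w * GG b m n (w - ((j:ℕ):ℤ) - 1)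
      + HH b m n (w - ((j:ℕ):ℤ) - 1)) = QQ b m n ((j:ℕ)+1) w := by
    intro j
    have : w - (((j:ℕ)+1 : ℕ):ℤ) = w - ((j:ℕ):ℤ) - 1 := by push_cast; ring
    rw [QQ, this]
  calc CC b m n w * (AA b m n w * BB b m n w
        + AA b m n w * ∑ j : Fin q, GG b m n (w - ((j:ℕ):ℤ) - 1)
        + ∑ j : Fin q, HH b m n (w - ((j:ℕ):ℤ) - 1))
      = PP b m n w + ∑ j : Fin q, (CC b m n w * (AA b m n w * GG b m n (w - ((j:ℕ):ℤ) - 1)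
          + HH b m n (w - ((j:ℕ):ℤ) - 1))) := by
        rw [PP]
        simp only [mul_add, Finset.mul_sum, Finset.sum_add_distrib]
        ring
    _ = PP b m n w + ∑ i ∈ Finset.range q, QQ b m n (i+1) w := by
        rw [Finset.sum_congr rfl (fun j _ => hQQ j)]
        rw [Fin.sum_univ_eq_sum_range (fun i => QQ b m n (i+1) w) q]

/-! ### The telescoping identity -/

lemma tele (b m n : ℝ) (hb : 1 < b) (hm : 0 < m) (hn : 0 < n) (w : ℤ) : ∀ q : ℕ,
    PP b m n w + ∑ i ∈ Finset.range q, QQ b m n (i+1) (w + ((i:ℤ)+1)) = WW b m n q w := by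
  have hbne : b ≠ 0 := by linarith
  have hb1 : b - 1 ≠ 0 := by linarith
  have ha0 : 0 < zf b m n w := zf_pos b m n w
  have ha1 : zf b m n w < 1 := zf_lt_one hb hm hn w
  have ha1' : 1 - zf b m n w ≠ 0 := by linarith
  intro q
  induction q with
  | zero =>
    simp only [Finset.range_zero, Finset.sum_empty, add_zero, WW, PP, CC, AA, BB,
      Int.natCast_zero, neg_zero, zpow_zero]
    field_simp
  | succ p ih =>
    rw [Finset.sum_range_succ, ← add_assoc, ih]
    have hu0 : 0 < zf b m n (w + ((p:ℤ)+1)) := zf_pos _ _ _ _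
    have hu1 : zf b m n (w + ((p:ℤ)+1)) < 1 := zf_lt_one hb hm hn _
    have hu1' : 1 - zf b m n (w + ((p:ℤ)+1)) ≠ 0 := by linarith
    have hQarg : w + ((p:ℤ)+1) - ((p+1 : ℕ):ℤ) = w := by push_cast; ring
    rw [QQ, hQarg]
    set a := zf b m n w with hadef
    set u := zf b m n (w + ((p:ℤ)+1)) with hudef
    set s : ℝ := b ^ (-((p:ℤ)+1)) with hsdef
    have hLu : Real.log u = s * Real.log a := log_zf_shift m n hb hm w ((p:ℤ)+1)
    have hsp : (0:ℝ) < s := zpow_pos (by linarith) _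
    have f2 : u ^ (1/(b-1) : ℝ) = a ^ (s/(b-1) : ℝ) := by
      rw [Real.rpow_def_of_pos hu0, Real.rpow_def_of_pos ha0, hLu]
      congr 1
      ring
    have f3 : a ^ (b * s/(b-1) : ℝ) = u ^ (1/(b-1) : ℝ) * u := by
      rw [Real.rpow_def_of_pos hu0, Real.rpow_def_of_pos ha0]
      nth_rewrite 2 [show u = Real.exp (Real.log u) from (Real.exp_log hu0).symm]
      rw [← Real.exp_add, hLu]
      congr 1
      field_simp
      ring
    have hbs : (b:ℝ) ^ (-(p:ℤ)) = b * s := by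
      rw [hsdef, show (-(p:ℤ)) = 1 + (-((p:ℤ)+1)) by ring, zpow_add₀ hbne, zpow_one]
    have hbs' : (b:ℝ) ^ (-((p+1:ℕ):ℤ)) = s := by
      rw [hsdef]; norm_cast
    rw [WW, WW, hbs, hbs', f3]
    rw [CC, AA, GG, HH, ← hudef, ← hadef, hLu, f2]
    set E := a ^ (s/(b-1) : ℝ) with hEdef
    set La := Real.log a
    field_simp
    ring

lemma WW_eq {b m n t : ℝ} (hb : 1 < b) (hm : 0 < m) (hn : 0 < n) (q : ℕ)
    (ht : t = b ^ (-(q : ℤ)) / (b - 1)) (w : ℤ) :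
    WW b m n q w = -(zf b m n w ^ (1 + t) * Real.log (zf b m n w) ^ 3 /
      (1 - zf b m n w) ^ 2 * (zf b m n w * (1 + t) - t)) := by
  have ha0 : 0 < zf b m n w := zf_pos b m n w
  have ha1 : zf b m n w < 1 := zf_lt_one hb hm hn w
  have h1a : 1 - zf b m n w ≠ 0 := by linarith
  have hb1 : b - 1 ≠ 0 := by linarith
  have hpow : zf b m n w ^ (1+t : ℝ) = zf b m n w * zf b m n w ^ (t : ℝ) := by
    rw [Real.rpow_add ha0, Real.rpow_one]
  rw [WW, ← ht, hpow]
  field_simp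
  ring

set_option maxHeartbeats 1000000 in
/-- the exact cross-term identity in the first-order ML bias computation. -/
theorem ml_bias_cross_term_identity (b m n t : ℝ) (hb : 1 < b) (hm : 0 < m) (hn : 0 < n)
    (q : ℕ) (ht : t = b ^ (-(q : ℤ)) / (b - 1))
    (hL : Summable fun w : ℤ =>
      ∑ β : Fin q → Fin 2, |ptilde b m n q w β * F1 b m n q w β * F2 b m n q w β|)
    (hR : Summable fun w : ℤ =>
      |zf b m n w ^ (1 + t) * Real.log (zf b m n w) ^ 3 / (1 - zf b m n w) ^ 2 *
        (zf b m n w * (1 + t) - t)|) :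
    (∑' w : ℤ, ∑ β : Fin q → Fin 2, ptilde b m n q w β * F1 b m n q w β * F2 b m n q w β)
      = -∑' w : ℤ, zf b m n w ^ (1 + t) * Real.log (zf b m n w) ^ 3 / (1 - zf b m n w) ^ 2 *
          (zf b m n w * (1 + t) - t) := by
  have hp : Summable (PP b m n) := PP_summable hb hm hn
  have hq : ∀ i : ℕ, Summable (fun w : ℤ => QQ b m n (i+1) w) :=
    fun i => QQ_summable hb hm hn (i+1)
  have hqs : ∀ i : ℕ, Summable (fun w : ℤ => QQ b m n (i+1) (w + ((i:ℤ)+1))) :=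
    fun i => (Equiv.addRight ((i:ℤ)+1)).summable_iff.mpr (hq i)
  calc (∑' w : ℤ, ∑ β : Fin q → Fin 2, ptilde b m n q w β * F1 b m n q w β * F2 b m n q w β)
      = ∑' w : ℤ, (PP b m n w + ∑ i ∈ Finset.range q, QQ b m n (i+1) w) :=
        tsum_congr (fun w => pointwise b m n hb hm hn q w)
    _ = (∑' w : ℤ, PP b m n w) + ∑' w : ℤ, ∑ i ∈ Finset.range q, QQ b m n (i+1) w :=
        Summable.tsum_add hp (summable_sum (fun i _ => hq i))
    _ = (∑' w : ℤ, PP b m n w) + ∑ i ∈ Finset.range q, ∑' w : ℤ, QQ b m n (i+1) w := by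
        rw [Summable.tsum_finsetSum (fun i _ => hq i)]
    _ = (∑' w : ℤ, PP b m n w) + ∑ i ∈ Finset.range q,
          ∑' w : ℤ, QQ b m n (i+1) (w + ((i:ℤ)+1)) := by
        congr 1
        refine Finset.sum_congr rfl (fun i _ => ?_)
        exact ((Equiv.addRight ((i:ℤ)+1)).tsum_eq (fun w => QQ b m n (i+1) w)).symm
    _ = (∑' w : ℤ, PP b m n w) + ∑' w : ℤ, ∑ i ∈ Finset.range q,
          QQ b m n (i+1) (w + ((i:ℤ)+1)) := by
        rw [Summable.tsum_finsetSum (fun i _ => hqs i)]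
    _ = ∑' w : ℤ, (PP b m n w + ∑ i ∈ Finset.range q, QQ b m n (i+1) (w + ((i:ℤ)+1))) :=
        (Summable.tsum_add hp (summable_sum (fun i _ => hqs i))).symm
    _ = ∑' w : ℤ, WW b m n q w := tsum_congr (fun w => tele b m n hb hm hn w q)
    _ = ∑' w : ℤ, -(zf b m n w ^ (1 + t) * Real.log (zf b m n w) ^ 3 /
          (1 - zf b m n w) ^ 2 * (zf b m n w * (1 + t) - t)) :=
        tsum_congr (fun w => WW_eq hb hm hn q ht w)
    _ = -∑' w : ℤ, zf b m n w ^ (1 + t) * Real.log (zf b m n w) ^ 3 /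
          (1 - zf b m n w) ^ 2 * (zf b m n w * (1 + t) - t) := tsum_neg
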